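/- Let N and d be positive natural numbers, for each i ∈ {1,...,d} let g_i : X → {0,...,N} be a function, let ε > 0, let D_op and D_test be nonempty finite multisets over X, and let D_can ⊆ D_test. Call a sub-multiset S ⊆ D_can with |S| < |D_test| feasible if D_op and D_test − S are ε-portion similar. Then a feasible sub-multiset S* is a solution of the distribution-reshaping problem (i.e., S* has minimum cardinality among all feasible sub-multisets of D_can) if and only if S* satisfies, for all i ∈ {1,...,d} and j ∈ {0,...,N}, the linear constraints −ε·(|D_test| − |S*|) ≤ (ct(j, g_i(D_op))/|D_op|)·(|D_test| − |S*|) − (ct(j, g_i(D_test)) − ct(j, g_i(S*))) ≤ ε·(|D_test| − |S*|), and |S*| ≤ |S| for every S ⊆ D_can with |S| < |D_test| satisfying these linear constraints. In particular, the minimum cardinality over feasible sub-multisets equals the optimal value of the linearized (MILP) problem. -/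

import Mathlib

/-! For `S ≤ D_test` with `|S| < |D_test|` the denominator `|D_test| - |S|` is positive, and
`ct(j, g_i(D_test - S)) = ct(j, g_i(D_test)) - ct(j, g_i(S))`. Multiplying each similarity
constraint by that denominator therefore turns it into the corresponding linear constraint, so
similarity and the linearized constraints single out the same candidates `S`; minimality over
either family, and the two optimal values, then coincide. -/

namespace Multiset

variable {α β : Type*} [DecidableEq α] [DecidableEq β]

theorem map_tsub_of_le (f : α → β) {s t : Multiset α} (h : s ≤ t) :
    (t - s).map f = t.map f - s.map f := by
  rw [eq_tsub_iff_add_eq_of_le (map_le_map h), ← map_add, tsub_add_cancel_of_le h]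

theorem cast_count_map_tsub_of_le {R : Type*} [AddGroupWithOne R] (f : α → β) (b : β)
    {s t : Multiset α} (h : s ≤ t) :
    (((t - s).map f).count b : R) = ((t.map f).count b : R) - ((s.map f).count b : R) := by
  rw [map_tsub_of_le f h, count_sub, Nat.cast_sub (count_le_of_le b (map_le_map h))]

end Multiset

theorem sub_div_bounds_iff_mul_bounds {F : Type*} [Field F] [LinearOrder F] [IsStrictOrderedRing F]
    {ε a b D : F} (hD : 0 < D) :
    (-ε ≤ a - b / D ∧ a - b / D ≤ ε) ↔ (-ε * D ≤ a * D - b ∧ a * D - b ≤ ε * D) := by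
  rw [show a - b / D = (a * D - b) / D by field_simp, le_div_iff₀ hD, div_le_iff₀ hD]

theorem reshaping_optimum_iff_milp_optimum_general (X : Type*) [DecidableEq X]
    (N d : ℕ)
    (g : Fin d → X → ℕ)
    (ε : ℝ)
    (Dop Dtest : Multiset X)
    (Dcan : Multiset X) (hcan : Dcan ≤ Dtest)
    -- the ε-portion-similarity constraint for `D_op` and `D_test − S`:
    (Similar : Multiset X → Prop)
    (hSimilar : ∀ S : Multiset X, Similar S ↔
      (∀ i : Fin d, ∀ j : ℕ, j ≤ N →
        -ε ≤ ((Dop.map (g i)).count j : ℝ) / (Dop.card : ℝ)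
              - (((Dtest - S).map (g i)).count j : ℝ) / ((Dtest.card : ℝ) - (S.card : ℝ)) ∧
        ((Dop.map (g i)).count j : ℝ) / (Dop.card : ℝ)
              - (((Dtest - S).map (g i)).count j : ℝ) / ((Dtest.card : ℝ) - (S.card : ℝ)) ≤ ε))
    -- the linearized (MILP) constraints:
    (Lin : Multiset X → Prop)
    (hLin : ∀ S : Multiset X, Lin S ↔
      (∀ i : Fin d, ∀ j : ℕ, j ≤ N →
        -ε * ((Dtest.card : ℝ) - (S.card : ℝ)) ≤
            ((Dop.map (g i)).count j : ℝ) / (Dop.card : ℝ) * ((Dtest.card : ℝ) - (S.card : ℝ))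
              - (((Dtest.map (g i)).count j : ℝ) - ((S.map (g i)).count j : ℝ)) ∧
        ((Dop.map (g i)).count j : ℝ) / (Dop.card : ℝ) * ((Dtest.card : ℝ) - (S.card : ℝ))
              - (((Dtest.map (g i)).count j : ℝ) - ((S.map (g i)).count j : ℝ)) ≤
            ε * ((Dtest.card : ℝ) - (S.card : ℝ))))
    (Sstar : Multiset X) (hSstar : Sstar ≤ Dcan) (hSstarCard : Sstar.card < Dtest.card)
    (hSstarFeas : Similar Sstar) :
    ((∀ S : Multiset X, S ≤ Dcan → S.card < Dtest.card → Similar S →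
        Sstar.card ≤ S.card)
      ↔
     (Lin Sstar ∧
      ∀ S : Multiset X, S ≤ Dcan → S.card < Dtest.card → Lin S →
        Sstar.card ≤ S.card))
    ∧
    sInf {n : ℕ | ∃ S : Multiset X, S ≤ Dcan ∧ S.card < Dtest.card ∧ Similar S ∧ S.card = n}
      = sInf {n : ℕ | ∃ S : Multiset X, S ≤ Dcan ∧ S.card < Dtest.card ∧ Lin S ∧ S.card = n} := by
  have similar_iff_lin (S : Multiset X) (hS : S ≤ Dcan) (hcard : S.card < Dtest.card) :
      Similar S ↔ Lin S := by
    have hpos : (0 : ℝ) < Dtest.card - S.card := sub_pos.2 (by exact_mod_cast hcard)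
    rw [hSimilar, hLin]
    refine forall_congr' fun i => forall_congr' fun j => imp_congr_right fun _ => ?_
    rw [Multiset.cast_count_map_tsub_of_le _ _ (hS.trans hcan)]
    exact sub_div_bounds_iff_mul_bounds hpos
  have minimal_iff : (∀ S : Multiset X, S ≤ Dcan → S.card < Dtest.card → Similar S →
      Sstar.card ≤ S.card) ↔ ∀ S : Multiset X, S ≤ Dcan → S.card < Dtest.card → Lin S →
      Sstar.card ≤ S.card :=
    forall_congr' fun S => forall_congr' fun hS => forall_congr' fun hcard => by
      rw [similar_iff_lin S hS hcard]
  refine ⟨minimal_iff.trans ⟨fun h => ⟨(similar_iff_lin _ hSstar hSstarCard).1 hSstarFeas, h⟩,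
    And.right⟩, ?_⟩
  congr 1
  ext n
  exact exists_congr fun S => and_congr_right fun hS => and_congr_right fun hcard => by
    rw [similar_iff_lin S hS hcard]

/-- A feasible sub-multiset `S*` (i.e. `S* ⊆ D_can`, `|S*| < |D_test|`, and
`D_op`, `D_test − S*` are ε-portion similar) is a minimum-cardinality solution of the
distribution-reshaping problem if and only if it satisfies the linearized (MILP)
constraints and has cardinality at most that of every `S ⊆ D_can` with `|S| < |D_test|`
satisfying the linearized constraints. In particular, the minimum cardinality over
feasible sub-multisets equals the optimal value of the linearized (MILP) problem. -/
theorem reshaping_optimum_iff_milp_optimum (X : Type*) [DecidableEq X]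
    (N d : ℕ) (hN : 0 < N) (hd : 0 < d)
    (g : Fin d → X → ℕ) (hg : ∀ i x, g i x ≤ N)
    (ε : ℝ) (hε : 0 < ε)
    (Dop Dtest : Multiset X) (hop : Dop ≠ 0) (htest : Dtest ≠ 0)
    (Dcan : Multiset X) (hcan : Dcan ≤ Dtest)
    -- the ε-portion-similarity constraint for `D_op` and `D_test − S`:
    (Similar : Multiset X → Prop)
    (hSimilar : ∀ S : Multiset X, Similar S ↔
      (∀ i : Fin d, ∀ j : ℕ, j ≤ N →
        -ε ≤ ((Dop.map (g i)).count j : ℝ) / (Dop.card : ℝ)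
              - (((Dtest - S).map (g i)).count j : ℝ) / ((Dtest.card : ℝ) - (S.card : ℝ)) ∧
        ((Dop.map (g i)).count j : ℝ) / (Dop.card : ℝ)
              - (((Dtest - S).map (g i)).count j : ℝ) / ((Dtest.card : ℝ) - (S.card : ℝ)) ≤ ε))
    -- the linearized (MILP) constraints:
    (Lin : Multiset X → Prop)
    (hLin : ∀ S : Multiset X, Lin S ↔
      (∀ i : Fin d, ∀ j : ℕ, j ≤ N →
        -ε * ((Dtest.card : ℝ) - (S.card : ℝ)) ≤
            ((Dop.map (g i)).count j : ℝ) / (Dop.card : ℝ) * ((Dtest.card : ℝ) - (S.card : ℝ))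
              - (((Dtest.map (g i)).count j : ℝ) - ((S.map (g i)).count j : ℝ)) ∧
        ((Dop.map (g i)).count j : ℝ) / (Dop.card : ℝ) * ((Dtest.card : ℝ) - (S.card : ℝ))
              - (((Dtest.map (g i)).count j : ℝ) - ((S.map (g i)).count j : ℝ)) ≤
            ε * ((Dtest.card : ℝ) - (S.card : ℝ))))
    (Sstar : Multiset X) (hSstar : Sstar ≤ Dcan) (hSstarCard : Sstar.card < Dtest.card)
    (hSstarFeas : Similar Sstar) :
    ((∀ S : Multiset X, S ≤ Dcan → S.card < Dtest.card → Similar S →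
        Sstar.card ≤ S.card)
      ↔
     (Lin Sstar ∧
      ∀ S : Multiset X, S ≤ Dcan → S.card < Dtest.card → Lin S →
        Sstar.card ≤ S.card))
    ∧
    sInf {n : ℕ | ∃ S : Multiset X, S ≤ Dcan ∧ S.card < Dtest.card ∧ Similar S ∧ S.card = n}
      = sInf {n : ℕ | ∃ S : Multiset X, S ≤ Dcan ∧ S.card < Dtest.card ∧ Lin S ∧ S.card = n} :=
  reshaping_optimum_iff_milp_optimum_general X N d g ε Dop Dtest Dcan hcan Similar hSimilar Lin hLin
    Sstar hSstar hSstarCard hSstarFeas
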